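/- Let 0 < α < 1, assume the SICA parameters are positive, the incidence function f satisfies (H1)–(H3), and let (S*, I*, C*, A*) with S*, I*, C*, A* > 0 satisfy the equilibrium relations Λ = μS* + f(S*,I*)I*, ξ₁I* = f(S*,I*)I* + ωC* + σA*, φI* = ξ₂C*, ρI* = ξ₃A*. Assume (H4): (1 − f(S,I)/f(S,I*))(f(S,I*)/f(S,I) − I/I*) ≤ 0 for all S, I > 0. Let (S,I,C,A) be a solution of the fractional SICA system on [0,T] with S, I, C, A positive on [0,T]. Define V₂(t) = S(t) − S* − ∫_{S*}^{S(t)} f(S*,I*)/f(X,I*) dX + I(t) − I* − I* ln(I(t)/I*) + (ω/ξ₂)(C(t) − C* − C* ln(C(t)/C*)) + (σ/ξ₃)(A(t) − A* − A* ln(A(t)/A*)). Then ᶜD^α V₂(t) ≤ 0 for all t ∈ (0,T]. -/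

import Mathlib

/-- The Caputo fractional derivative of order `α` (0 < α < 1) based at `0`:
`ᶜD^α φ(t) = (1/Γ(1−α)) ∫₀ᵗ φ′(x)(t−x)^{−α} dx`. -/
noncomputable def caputo (α : ℝ) (φ : ℝ → ℝ) (t : ℝ) : ℝ :=
  (1 / Real.Gamma (1 - α)) * ∫ x in (0:ℝ)..t, deriv φ x * (t - x) ^ (-α)

/-!
Each summand of `V₂` is `G (x t)` for a convex `C¹` function `G` of one state variable `x`
(for the `S`-term because `f (·, I*)` is increasing). For such `G`,
`ᶜD^α (G ∘ x) (t) ≤ G' (x t) · ᶜD^α x (t)`: the function `G ∘ x - G' (x t) · x` attains its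
minimum over `[0, t]` at `t`, and integrating by parts against the kernel `(t - s)^(-α)` shows
that a Caputo derivative is nonpositive at such a point. Substituting the system and the
equilibrium relations into the resulting combination of Caputo derivatives leaves a sum of terms
that are nonpositive by the monotonicity of `f` in `S`, by AM–GM, and by (H4).
-/

open Set Filter Topology MeasureTheory intervalIntegral

theorem ConvexOn.add_deriv_mul_sub_le {s : Set ℝ} {f : ℝ → ℝ} {x y : ℝ} (hf : ConvexOn ℝ s f)
    (hx : x ∈ s) (hy : y ∈ s) (hd : DifferentiableAt ℝ f x) : f x + deriv f x * (y - x) ≤ f y := by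
  rcases lt_trichotomy y x with hyx | rfl | hxy
  · have h := hf.slope_le_deriv hy hx hyx hd
    rw [slope_def_field, div_le_iff₀ (sub_pos.2 hyx)] at h
    linarith
  · simp
  · have h := hf.deriv_le_slope hx hy hxy hd
    rw [slope_def_field, le_div_iff₀ (sub_pos.2 hxy)] at h
    linarith

theorem contDiffOn_one_of_hasDerivAt {s : Set ℝ} {f f' : ℝ → ℝ} (hs : IsOpen s)
    (hf : ∀ x ∈ s, HasDerivAt f (f' x) x) (hf' : ContinuousOn f' s) : ContDiffOn ℝ 1 f s := by
  rw [show (1 : WithTop ℕ∞) = 0 + 1 from rfl, contDiffOn_succ_iff_deriv_of_isOpen hs]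
  refine ⟨fun x hx => (hf x hx).differentiableAt.differentiableWithinAt, by simp, ?_⟩
  rw [contDiffOn_zero]
  exact hf'.congr fun x hx => (hf x hx).deriv

noncomputable def volterra (g : ℝ → ℝ) (a y : ℝ) : ℝ := y - a - ∫ X in a..y, g a / g X

section Volterra

variable {g : ℝ → ℝ} {a : ℝ}

theorem volterra_id {y : ℝ} (ha : 0 < a) (hy : 0 < y) :
    volterra id a y = y - a - a * Real.log (y / a) := by
  simp only [volterra, id, div_eq_mul_inv a, intervalIntegral.integral_const_mul,
    integral_inv_of_pos ha hy]

theorem hasDerivAt_volterra (hg : ContinuousOn g (Ioi 0)) (hpos : ∀ x ∈ Ioi 0, 0 < g x)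
    (ha : 0 < a) {y : ℝ} (hy : 0 < y) :
    HasDerivAt (volterra g a) (1 - g a / g y) y := by
  have hc : ContinuousOn (fun X => g a / g X) (Ioi 0) :=
    continuousOn_const.div hg fun x hx => (hpos x hx).ne'
  have hI := integral_hasDerivAt_right
    ((hc.mono fun z hz => (lt_min ha hy).trans_le hz.1).intervalIntegrable)
    (hc.stronglyMeasurableAtFilter isOpen_Ioi y hy) (hc.continuousAt (isOpen_Ioi.mem_nhds hy))
  exact ((hasDerivAt_id y).sub_const a).sub hI

theorem contDiffOn_volterra (hg : ContinuousOn g (Ioi 0)) (hpos : ∀ x ∈ Ioi 0, 0 < g x)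
    (ha : 0 < a) : ContDiffOn ℝ 1 (volterra g a) (Ioi 0) :=
  contDiffOn_one_of_hasDerivAt isOpen_Ioi (fun _ hy => hasDerivAt_volterra hg hpos ha hy)
    (continuousOn_const.sub (continuousOn_const.div hg fun x hx => (hpos x hx).ne'))

theorem convexOn_volterra (hg : ContinuousOn g (Ioi 0)) (hpos : ∀ x ∈ Ioi 0, 0 < g x)
    (hmono : MonotoneOn g (Ioi 0)) (ha : 0 < a) : ConvexOn ℝ (Ioi 0) (volterra g a) := by
  refine MonotoneOn.convexOn_of_deriv (convex_Ioi 0)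
    (contDiffOn_volterra hg hpos ha).continuousOn ?_ ?_ <;> rw [interior_Ioi]
  · exact (contDiffOn_volterra hg hpos ha).differentiableOn one_ne_zero
  · intro x hx y hy hxy
    rw [(hasDerivAt_volterra hg hpos ha hx).deriv, (hasDerivAt_volterra hg hpos ha hy).deriv]
    gcongr 1 - ?_
    exact div_le_div_of_nonneg_left (hpos a ha).le (hpos x hx) (hmono hx hy hxy)

end Volterra

section Caputo

variable {α T t : ℝ}

theorem caputo_eq_integral_derivWithin (f : ℝ → ℝ) (ht : t ∈ Icc 0 T) :
    caputo α f t =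
      (1 / Real.Gamma (1 - α)) * ∫ x in (0:ℝ)..t, derivWithin f (Icc 0 T) x * (t - x) ^ (-α) := by
  unfold caputo
  congr 1
  refine integral_congr_ae ?_
  filter_upwards [(countable_singleton t).ae_notMem volume] with x hxt hx
  rw [uIoc_of_le ht.1] at hx
  replace hxt : x < t := lt_of_le_of_ne hx.2 hxt
  rw [derivWithin_of_mem_nhds (Icc_mem_nhds hx.1 (hxt.trans_le ht.2))]

theorem intervalIntegrable_mul_rpow_neg {g : ℝ → ℝ} (hα1 : α < 1) (ht : 0 ≤ t)
    (hg : ContinuousOn g (Icc 0 t)) :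
    IntervalIntegrable (fun x => g x * (t - x) ^ (-α)) volume 0 t := by
  have hK : IntervalIntegrable (fun x => (t - x) ^ (-α)) volume 0 t := by
    simpa using ((intervalIntegrable_rpow' (a := 0) (b := t) (by linarith)).comp_sub_left t).symm
  exact hK.continuousOn_mul (by rwa [uIcc_of_le ht])

theorem intervalIntegrable_derivWithin_mul_rpow_neg {f : ℝ → ℝ}
    (hf : ContDiffOn ℝ 1 f (Icc 0 T)) (hα1 : α < 1) (ht : t ∈ Ioc 0 T) :
    IntervalIntegrable (fun x => derivWithin f (Icc 0 T) x * (t - x) ^ (-α)) volume 0 t :=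
  intervalIntegrable_mul_rpow_neg hα1 ht.1.le <|
    (hf.continuousOn_derivWithin (uniqueDiffOn_Icc (ht.1.trans_le ht.2)) le_rfl).mono
      (Icc_subset_Icc_right ht.2)

theorem caputo_add {f g : ℝ → ℝ} (hf : ContDiffOn ℝ 1 f (Icc 0 T))
    (hg : ContDiffOn ℝ 1 g (Icc 0 T)) (hα1 : α < 1) (ht : t ∈ Ioc 0 T) :
    caputo α (fun τ => f τ + g τ) t = caputo α f t + caputo α g t := by
  have ht' : t ∈ Icc 0 T := Ioc_subset_Icc_self ht
  simp only [caputo_eq_integral_derivWithin _ ht', ← mul_add]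
  rw [← integral_add (intervalIntegrable_derivWithin_mul_rpow_neg hf hα1 ht)
    (intervalIntegrable_derivWithin_mul_rpow_neg hg hα1 ht)]
  refine congrArg _ (integral_congr fun x hx => ?_)
  have hx : x ∈ Icc 0 T := Icc_subset_Icc_right ht.2 (by rwa [uIcc_of_le ht.1.le] at hx)
  rw [derivWithin_fun_add ((hf.differentiableOn one_ne_zero) x hx)
    ((hg.differentiableOn one_ne_zero) x hx), add_mul]

theorem caputo_sub {f g : ℝ → ℝ} (hf : ContDiffOn ℝ 1 f (Icc 0 T))
    (hg : ContDiffOn ℝ 1 g (Icc 0 T)) (hα1 : α < 1) (ht : t ∈ Ioc 0 T) :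
    caputo α (fun τ => f τ - g τ) t = caputo α f t - caputo α g t := by
  have ht' : t ∈ Icc 0 T := Ioc_subset_Icc_self ht
  simp only [caputo_eq_integral_derivWithin _ ht', ← mul_sub]
  rw [← integral_sub (intervalIntegrable_derivWithin_mul_rpow_neg hf hα1 ht)
    (intervalIntegrable_derivWithin_mul_rpow_neg hg hα1 ht)]
  refine congrArg _ (integral_congr fun x hx => ?_)
  have hx : x ∈ Icc 0 T := Icc_subset_Icc_right ht.2 (by rwa [uIcc_of_le ht.1.le] at hx)
  rw [derivWithin_fun_sub ((hf.differentiableOn one_ne_zero) x hx)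
    ((hg.differentiableOn one_ne_zero) x hx), sub_mul]

theorem caputo_const_mul (c : ℝ) (f : ℝ → ℝ) :
    caputo α (fun τ => c * f τ) t = c * caputo α f t := by
  simp only [caputo, deriv_const_mul_field', mul_assoc, intervalIntegral.integral_const_mul]
  ring

theorem caputo_congr {u v : ℝ → ℝ} (h : EqOn u v (Icc 0 T)) (ht : t ∈ Icc 0 T) :
    caputo α u t = caputo α v t := by
  simp only [caputo_eq_integral_derivWithin _ ht]
  refine congrArg _ (integral_congr fun x hx => ?_)
  have hx : x ∈ Icc 0 T := Icc_subset_Icc_right ht.2 (by rwa [uIcc_of_le ht.1] at hx)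
  simp only [derivWithin_congr h.symm (h hx).symm]

theorem hasDerivAt_sub_rpow_neg {x : ℝ} (hx : x < t) :
    HasDerivAt (fun y => (t - y) ^ (-α)) (α * (t - x) ^ (-α - 1)) x := by
  have h := ((Real.hasDerivAt_rpow_const (p := -α) (Or.inl (sub_pos.2 hx).ne')).comp x
    ((hasDerivAt_id x).const_sub t))
  exact h.congr_deriv (by ring)

theorem integral_deriv_mul_rpow_neg_le {W W' : ℝ → ℝ} {u : ℝ} (hα0 : 0 ≤ α) (hu : 0 ≤ u)
    (hut : u < t) (hW : ∀ x ∈ Icc 0 u, HasDerivWithinAt W (W' x) (Icc 0 u) x)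
    (hW' : IntervalIntegrable W' volume 0 u) (hmin : ∀ x ∈ Icc 0 u, W t ≤ W x) :
    ∫ x in (0:ℝ)..u, W' x * (t - x) ^ (-α) ≤ (W u - W t) * (t - u) ^ (-α) := by
  have hIcc : uIcc 0 u = Icc 0 u := uIcc_of_le hu
  have hK : ∀ x ∈ uIcc 0 u, HasDerivWithinAt (fun y => (t - y) ^ (-α))
      (α * (t - x) ^ (-α - 1)) (uIcc 0 u) x := fun x hx =>
    (hasDerivAt_sub_rpow_neg ((hIcc ▸ hx).2.trans_lt hut)).hasDerivWithinAt
  have hK' : ContinuousOn (fun x => α * (t - x) ^ (-α - 1)) (uIcc 0 u) := by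
    refine continuousOn_const.mul (ContinuousOn.rpow_const (by fun_prop) fun x hx => ?_)
    exact Or.inl (sub_pos.2 ((hIcc ▸ hx).2.trans_lt hut)).ne'
  have hibp := integral_mul_deriv_eq_deriv_mul_of_hasDerivWithinAt hK
    (fun x hx => ((hW x (hIcc ▸ hx)).sub_const (W t)).mono hIcc.subset)
    hK'.intervalIntegrable hW'
  have hrest : 0 ≤ ∫ x in (0:ℝ)..u, α * (t - x) ^ (-α - 1) * (W x - W t) :=
    integral_nonneg hu fun x hx => mul_nonneg
      (mul_nonneg hα0 (Real.rpow_nonneg (by linarith [hx.2]) _)) (sub_nonneg.2 (hmin x hx))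
  have h0 : 0 ≤ (t - 0) ^ (-α) * (W 0 - W t) :=
    mul_nonneg (Real.rpow_nonneg (by linarith) _) (sub_nonneg.2 (hmin 0 ⟨le_rfl, hu⟩))
  simp only [mul_comm (W' _)] at hibp ⊢
  linarith

theorem integral_deriv_mul_rpow_neg_nonpos {W W' : ℝ → ℝ} (hα0 : 0 ≤ α) (hα1 : α < 1)
    (ht : 0 < t) (hW : ∀ x ∈ Icc 0 t, HasDerivWithinAt W (W' x) (Icc 0 t) x)
    (hW' : ContinuousOn W' (Icc 0 t)) (hmin : IsMinOn W (Icc 0 t) t) :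
    ∫ x in (0:ℝ)..t, W' x * (t - x) ^ (-α) ≤ 0 := by
  obtain ⟨M, hM⟩ := isCompact_Icc.exists_bound_of_continuousOn hW'
  -- The kernel is singular at `t`: integrate by parts on `[0, u]` and let `u → t⁻`.
  have hbound : ∀ u ∈ Ioo 0 t,
      ∫ x in (0:ℝ)..u, W' x * (t - x) ^ (-α) ≤ M * (t - u) ^ (1 - α) := by
    intro u hu
    have hsubu : Icc 0 u ⊆ Icc 0 t := Icc_subset_Icc_right hu.2.le
    have hlip : ‖W u - W t‖ ≤ M * ‖u - t‖ :=
      (convex_Icc u t).norm_image_sub_le_of_norm_hasDerivWithin_le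
        (fun x hx => (hW x ⟨hu.1.le.trans hx.1, hx.2⟩).mono (Icc_subset_Icc_left hu.1.le))
        (fun x hx => hM x ⟨hu.1.le.trans hx.1, hx.2⟩)
        (right_mem_Icc.2 hu.2.le) (left_mem_Icc.2 hu.2.le)
    have htu : 0 < t - u := sub_pos.2 hu.2
    rw [Real.norm_eq_abs, Real.norm_eq_abs, abs_sub_comm u, abs_of_pos htu] at hlip
    calc ∫ x in (0:ℝ)..u, W' x * (t - x) ^ (-α)
        ≤ (W u - W t) * (t - u) ^ (-α) :=
          integral_deriv_mul_rpow_neg_le hα0 hu.1.le hu.2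
            (fun x hx => (hW x (hsubu hx)).mono hsubu)
            ((hW'.mono hsubu).intervalIntegrable_of_Icc hu.1.le) (fun x hx => hmin (hsubu hx))
      _ ≤ M * (t - u) * (t - u) ^ (-α) :=
          mul_le_mul_of_nonneg_right ((le_abs_self _).trans hlip) (Real.rpow_nonneg htu.le _)
      _ = M * (t - u) ^ (1 - α) := by
          rw [sub_eq_add_neg 1 α, Real.rpow_add htu, Real.rpow_one, mul_assoc]
  have hprim : Tendsto (fun u => ∫ x in (0:ℝ)..u, W' x * (t - x) ^ (-α)) (𝓝[<] t)
      (𝓝 (∫ x in (0:ℝ)..t, W' x * (t - x) ^ (-α))) := by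
    rw [← nhdsWithin_Ioo_eq_nhdsLT ht]
    refine ((continuousOn_primitive_interval' (intervalIntegrable_mul_rpow_neg hα1 ht.le hW')
      left_mem_uIcc) t right_mem_uIcc).mono_left (nhdsWithin_mono _ ?_)
    rw [uIcc_of_le ht.le]
    exact Ioo_subset_Icc_self
  have hpow : Tendsto (fun u => M * (t - u) ^ (1 - α)) (𝓝[<] t) (𝓝 0) := by
    have h := (((continuous_const (y := t)).sub continuous_id).rpow_const
      (fun _ => Or.inr (sub_pos.2 hα1).le)).tendsto t
    simp only [Pi.sub_apply, id, sub_self, Real.zero_rpow (sub_pos.2 hα1).ne'] at h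
    simpa using (h.const_mul M).mono_left nhdsWithin_le_nhds
  refine le_of_tendsto_of_tendsto hprim hpow ?_
  rw [← nhdsWithin_Ioo_eq_nhdsLT ht]
  exact eventually_nhdsWithin_of_forall hbound

theorem caputo_nonpos_of_isMinOn {W : ℝ → ℝ} (hW : ContDiffOn ℝ 1 W (Icc 0 T)) (hα0 : 0 ≤ α)
    (hα1 : α < 1) (ht : t ∈ Ioc 0 T) (hmin : IsMinOn W (Icc 0 t) t) : caputo α W t ≤ 0 := by
  have hsub : Icc 0 t ⊆ Icc 0 T := Icc_subset_Icc_right ht.2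
  rw [caputo_eq_integral_derivWithin W (Ioc_subset_Icc_self ht)]
  refine mul_nonpos_of_nonneg_of_nonpos
    (one_div_nonneg.2 (Real.Gamma_pos_of_pos (sub_pos.2 hα1)).le)
    (integral_deriv_mul_rpow_neg_nonpos hα0 hα1 ht.1 (fun x hx => ?_) ?_ hmin)
  · exact ((hW.differentiableOn one_ne_zero x (hsub hx)).hasDerivWithinAt).mono hsub
  · exact (hW.continuousOn_derivWithin (uniqueDiffOn_Icc (ht.1.trans_le ht.2)) le_rfl).mono hsub

theorem caputo_comp_le {G x : ℝ → ℝ} {U : Set ℝ} (hU : IsOpen U) (hGc : ConvexOn ℝ U G)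
    (hG : ContDiffOn ℝ 1 G U) (hx : ContDiffOn ℝ 1 x (Icc 0 T)) (hxU : MapsTo x (Icc 0 T) U)
    (hα0 : 0 ≤ α) (hα1 : α < 1) (ht : t ∈ Ioc 0 T) :
    caputo α (fun τ => G (x τ)) t ≤ deriv G (x t) * caputo α x t := by
  have hGx : ContDiffOn ℝ 1 (fun τ => G (x τ)) (Icc 0 T) := hG.comp hx hxU
  have hL : ContDiffOn ℝ 1 (fun τ => deriv G (x t) * x τ) (Icc 0 T) := contDiffOn_const.mul hx
  have hmin : IsMinOn (fun τ => G (x τ) - deriv G (x t) * x τ) (Icc 0 t) t := fun s hs => by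
    have hsT : s ∈ Icc 0 T := Icc_subset_Icc_right ht.2 hs
    have hxt : x t ∈ U := hxU (Ioc_subset_Icc_self ht)
    have := hGc.add_deriv_mul_sub_le hxt (hxU hsT)
      ((hG.differentiableOn one_ne_zero).differentiableAt (hU.mem_nhds hxt))
    simp only [mem_ofPred_eq]
    linarith
  have h := caputo_nonpos_of_isMinOn (hGx.sub hL) hα0 hα1 ht hmin
  rw [caputo_sub hGx hL hα1 ht, caputo_const_mul] at h
  linarith

theorem caputo_volterra_comp_le {g x : ℝ → ℝ} {a : ℝ} (hg : ContinuousOn g (Ioi 0))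
    (hpos : ∀ y ∈ Ioi 0, 0 < g y) (hmono : MonotoneOn g (Ioi 0)) (ha : 0 < a)
    (hx : ContDiffOn ℝ 1 x (Icc 0 T)) (hxpos : ∀ τ ∈ Icc 0 T, 0 < x τ)
    (hα0 : 0 ≤ α) (hα1 : α < 1) (ht : t ∈ Ioc 0 T) :
    caputo α (fun τ => volterra g a (x τ)) t ≤ (1 - g a / g (x t)) * caputo α x t := by
  rw [← (hasDerivAt_volterra hg hpos ha (hxpos t (Ioc_subset_Icc_self ht))).deriv]
  exact caputo_comp_le isOpen_Ioi (convexOn_volterra hg hpos hmono ha)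
    (contDiffOn_volterra hg hpos ha) hx hxpos hα0 hα1 ht

theorem caputo_lyapunov_le {g S I C A : ℝ → ℝ} {Sstar Istar Cstar Astar k₃ k₄ : ℝ}
    (hg : ContinuousOn g (Ioi 0)) (hgpos : ∀ y ∈ Ioi 0, 0 < g y) (hgmono : MonotoneOn g (Ioi 0))
    (hSstar : 0 < Sstar) (hIstar : 0 < Istar) (hCstar : 0 < Cstar) (hAstar : 0 < Astar)
    (hk₃ : 0 ≤ k₃) (hk₄ : 0 ≤ k₄)
    (hS : ContDiffOn ℝ 1 S (Icc 0 T)) (hI : ContDiffOn ℝ 1 I (Icc 0 T))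
    (hC : ContDiffOn ℝ 1 C (Icc 0 T)) (hA : ContDiffOn ℝ 1 A (Icc 0 T))
    (hSpos : ∀ τ ∈ Icc 0 T, 0 < S τ) (hIpos : ∀ τ ∈ Icc 0 T, 0 < I τ)
    (hCpos : ∀ τ ∈ Icc 0 T, 0 < C τ) (hApos : ∀ τ ∈ Icc 0 T, 0 < A τ)
    (hα0 : 0 ≤ α) (hα1 : α < 1) (ht : t ∈ Ioc 0 T) :
    caputo α (fun τ => volterra g Sstar (S τ) + (I τ - Istar - Istar * Real.log (I τ / Istar))
        + k₃ * (C τ - Cstar - Cstar * Real.log (C τ / Cstar))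
        + k₄ * (A τ - Astar - Astar * Real.log (A τ / Astar))) t
      ≤ (1 - g Sstar / g (S t)) * caputo α S t + (1 - Istar / I t) * caputo α I t
        + k₃ * ((1 - Cstar / C t) * caputo α C t) + k₄ * ((1 - Astar / A t) * caputo α A t) := by
  have hvS : ContDiffOn ℝ 1 (fun τ => volterra g Sstar (S τ)) (Icc 0 T) :=
    (contDiffOn_volterra hg hgpos hSstar).comp hS hSpos
  have hvI : ContDiffOn ℝ 1 (fun τ => volterra id Istar (I τ)) (Icc 0 T) :=
    (contDiffOn_volterra continuousOn_id (fun _ hy => hy) hIstar).comp hI hIpos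
  have hvC : ContDiffOn ℝ 1 (fun τ => volterra id Cstar (C τ)) (Icc 0 T) :=
    (contDiffOn_volterra continuousOn_id (fun _ hy => hy) hCstar).comp hC hCpos
  have hvA : ContDiffOn ℝ 1 (fun τ => volterra id Astar (A τ)) (Icc 0 T) :=
    (contDiffOn_volterra continuousOn_id (fun _ hy => hy) hAstar).comp hA hApos
  rw [caputo_congr (v := fun τ => volterra g Sstar (S τ) + volterra id Istar (I τ)
      + k₃ * volterra id Cstar (C τ) + k₄ * volterra id Astar (A τ))
      (fun τ hτ => by simp only [volterra_id hIstar (hIpos τ hτ),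
        volterra_id hCstar (hCpos τ hτ), volterra_id hAstar (hApos τ hτ)])
      (Ioc_subset_Icc_self ht),
    caputo_add ((hvS.add hvI).add (contDiffOn_const.mul hvC)) (contDiffOn_const.mul hvA) hα1 ht,
    caputo_add (hvS.add hvI) (contDiffOn_const.mul hvC) hα1 ht, caputo_add hvS hvI hα1 ht,
    caputo_const_mul, caputo_const_mul]
  have hDS := caputo_volterra_comp_le hg hgpos hgmono hSstar hS hSpos hα0 hα1 ht
  have hDI := caputo_volterra_comp_le continuousOn_id (fun _ hy => hy) monotoneOn_id hIstar
    hI hIpos hα0 hα1 ht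
  have hDC := caputo_volterra_comp_le continuousOn_id (fun _ hy => hy) monotoneOn_id hCstar
    hC hCpos hα0 hα1 ht
  have hDA := caputo_volterra_comp_le continuousOn_id (fun _ hy => hy) monotoneOn_id hAstar
    hA hApos hα0 hα1 ht
  simp only [id] at hDI hDC hDA
  linarith [mul_le_mul_of_nonneg_left hDC hk₃, mul_le_mul_of_nonneg_left hDA hk₄]

end Caputo

section Incidence

variable {f : ℝ → ℝ → ℝ} {i : ℝ}

theorem continuousOn_incidence
    (hf : ContinuousOn (fun p : ℝ × ℝ => f p.1 p.2) (Ici 0 ×ˢ Ici 0)) (hi : 0 ≤ i) :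
    ContinuousOn (fun s => f s i) (Ici 0) :=
  hf.comp (continuous_id.prodMk continuous_const).continuousOn fun _ hs => ⟨hs, hi⟩

theorem strictMonoOn_incidence
    (hf : ContinuousOn (fun p : ℝ × ℝ => f p.1 p.2) (Ici 0 ×ˢ Ici 0))
    (hH2 : ∀ S I : ℝ, 0 < S → 0 ≤ I → 0 < deriv (fun s => f s I) S) (hi : 0 ≤ i) :
    StrictMonoOn (fun s => f s i) (Ici 0) :=
  strictMonoOn_of_deriv_pos (convex_Ici 0) (continuousOn_incidence hf hi)
    fun s hs => hH2 s i (by simpa using hs) hi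

theorem incidence_pos
    (hf : ContinuousOn (fun p : ℝ × ℝ => f p.1 p.2) (Ici 0 ×ˢ Ici 0))
    (hH1 : ∀ I : ℝ, 0 ≤ I → f 0 I = 0)
    (hH2 : ∀ S I : ℝ, 0 < S → 0 ≤ I → 0 < deriv (fun s => f s I) S) {s : ℝ} (hs : 0 < s)
    (hi : 0 ≤ i) : 0 < f s i :=
  hH1 i hi ▸ strictMonoOn_incidence hf hH2 hi (mem_Ici.2 le_rfl) hs.le hs

end Incidence

theorem three_le_div_add_div_add_div {a b c : ℝ} (ha : 0 < a) (hb : 0 < b) (hc : 0 < c) :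
    3 ≤ a / b + b / c + c / a := by
  have key : 3 * (a * b * c) ≤ a * a * c + b * b * a + c * c * b := by
    nlinarith [mul_nonneg ha.le (sq_nonneg (b - c)), mul_nonneg hb.le (sq_nonneg (c - a)),
      mul_nonneg hc.le (sq_nonneg (a - b)), mul_pos ha hb, mul_pos hb hc, mul_pos ha hc]
  rw [div_add_div _ _ hb.ne' hc.ne', div_add_div _ _ (by positivity) ha.ne',
    le_div_iff₀ (by positivity)]
  linarith

theorem two_le_add_one_div {u : ℝ} (hu : 0 < u) : 2 ≤ u + 1 / u := by
  have h : u + 1 / u - 2 = (u - 1) ^ 2 / u := by field_simp; ring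
  linarith [show 0 ≤ (u - 1) ^ 2 / u by positivity]

theorem sica_lyapunov_combination_nonpos {Λ μ φ ρ σ ω ξ₁ ξ₂ ξ₃ s₀ i₀ c₀ a₀ s i c a f₀ f₁ f₂ : ℝ}
    (hμ : 0 ≤ μ) (hσ : 0 ≤ σ) (hω : 0 ≤ ω) (hξ₂ : 0 < ξ₂) (hξ₃ : 0 < ξ₃)
    (hi₀ : 0 < i₀) (hc₀ : 0 < c₀) (ha₀ : 0 < a₀) (hi : 0 < i) (hc : 0 < c) (ha : 0 < a)
    (hf₀ : 0 < f₀) (hf₁ : 0 < f₁) (hf₂ : 0 < f₂)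
    (heq1 : Λ = μ * s₀ + f₀ * i₀) (heq2 : ξ₁ * i₀ = f₀ * i₀ + ω * c₀ + σ * a₀)
    (heq3 : φ * i₀ = ξ₂ * c₀) (heq4 : ρ * i₀ = ξ₃ * a₀)
    (hmono : 0 ≤ (f₁ - f₀) * (s - s₀)) (hH4 : (1 - f₂ / f₁) * (f₁ / f₂ - i / i₀) ≤ 0) :
    (1 - f₀ / f₁) * (Λ - μ * s - f₂ * i) + (1 - i₀ / i) * (f₂ * i - ξ₁ * i + σ * a + ω * c)
      + ω / ξ₂ * ((1 - c₀ / c) * (φ * i - ξ₂ * c))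
      + σ / ξ₃ * ((1 - a₀ / a) * (ρ * i - ξ₃ * a)) ≤ 0 := by
  have hξ₁ : ξ₁ = (f₀ * i₀ + ω * c₀ + σ * a₀) / i₀ := by rw [eq_div_iff hi₀.ne']; linarith
  have hφ : φ = ξ₂ * c₀ / i₀ := by rw [eq_div_iff hi₀.ne']; linarith
  have hρ : ρ = ξ₃ * a₀ / i₀ := by rw [eq_div_iff hi₀.ne']; linarith
  subst heq1 hξ₁ hφ hρ
  set u := i₀ * c / (c₀ * i)
  set v := i₀ * a / (a₀ * i)
  have key : (1 - f₀ / f₁) * (μ * s₀ + f₀ * i₀ - μ * s - f₂ * i)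
      + (1 - i₀ / i) * (f₂ * i - (f₀ * i₀ + ω * c₀ + σ * a₀) / i₀ * i + σ * a + ω * c)
      + ω / ξ₂ * ((1 - c₀ / c) * (ξ₂ * c₀ / i₀ * i - ξ₂ * c))
      + σ / ξ₃ * ((1 - a₀ / a) * (ξ₃ * a₀ / i₀ * i - ξ₃ * a))
      = -(μ * ((f₁ - f₀) * (s - s₀)) / f₁)
        + f₀ * i₀ * ((3 - (f₀ / f₁ + f₁ / f₂ + f₂ / f₀)) + (1 - f₂ / f₁) * (f₁ / f₂ - i / i₀))
        + ω * c₀ * (2 - (u + 1 / u)) + σ * a₀ * (2 - (v + 1 / v)) := by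
    simp only [u, v]
    field_simp
    ring
  rw [key]
  have hS : 0 ≤ μ * ((f₁ - f₀) * (s - s₀)) / f₁ := by positivity
  have hI : f₀ * i₀ * ((3 - (f₀ / f₁ + f₁ / f₂ + f₂ / f₀)) + (1 - f₂ / f₁) * (f₁ / f₂ - i / i₀))
      ≤ 0 :=
    mul_nonpos_of_nonneg_of_nonpos (by positivity)
      (by linarith [three_le_div_add_div_add_div hf₀ hf₁ hf₂])
  have hC : ω * c₀ * (2 - (u + 1 / u)) ≤ 0 :=
    mul_nonpos_of_nonneg_of_nonpos (by positivity)
      (sub_nonpos.2 (two_le_add_one_div (by positivity)))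
  have hA : σ * a₀ * (2 - (v + 1 / v)) ≤ 0 :=
    mul_nonpos_of_nonneg_of_nonpos (by positivity)
      (sub_nonpos.2 (two_le_add_one_div (by positivity)))
  linarith

theorem stmt_12_general (α T : ℝ) (hα0 : 0 < α) (hα1 : α < 1)
    (Λ μ ρ φ σ ω d ξ₁ ξ₂ ξ₃ : ℝ)
    (hμ : 0 < μ) (hσ : 0 < σ)
    (hω : 0 < ω) (hd : 0 < d)
    (hξ₂ : ξ₂ = ω + μ) (hξ₃ : ξ₃ = σ + μ + d)
    (f : ℝ → ℝ → ℝ)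
    (hf_cont : ContinuousOn (fun p : ℝ × ℝ => f p.1 p.2) (Set.Ici 0 ×ˢ Set.Ici 0))
    (hH1 : ∀ I : ℝ, 0 ≤ I → f 0 I = 0)
    (hH2 : ∀ S I : ℝ, 0 < S → 0 ≤ I → 0 < deriv (fun s => f s I) S)
    (Sstar Istar Cstar Astar : ℝ)
    (hSstar : 0 < Sstar) (hIstar : 0 < Istar) (hCstar : 0 < Cstar) (hAstar : 0 < Astar)
    (heq1 : Λ = μ * Sstar + f Sstar Istar * Istar)
    (heq2 : ξ₁ * Istar = f Sstar Istar * Istar + ω * Cstar + σ * Astar)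
    (heq3 : φ * Istar = ξ₂ * Cstar)
    (heq4 : ρ * Istar = ξ₃ * Astar)
    (hH4 : ∀ S I : ℝ, 0 < S → 0 < I →
      (1 - f S I / f S Istar) * (f S Istar / f S I - I / Istar) ≤ 0)
    (S I C A : ℝ → ℝ)
    (hS : ContDiffOn ℝ 1 S (Set.Icc 0 T)) (hI : ContDiffOn ℝ 1 I (Set.Icc 0 T))
    (hC : ContDiffOn ℝ 1 C (Set.Icc 0 T)) (hA : ContDiffOn ℝ 1 A (Set.Icc 0 T))
    (hSpos : ∀ t ∈ Set.Icc (0:ℝ) T, 0 < S t)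
    (hIpos : ∀ t ∈ Set.Icc (0:ℝ) T, 0 < I t)
    (hCpos : ∀ t ∈ Set.Icc (0:ℝ) T, 0 < C t)
    (hApos : ∀ t ∈ Set.Icc (0:ℝ) T, 0 < A t)
    (hsys1 : ∀ t ∈ Set.Ioc (0:ℝ) T,
      caputo α S t = Λ - μ * S t - f (S t) (I t) * I t)
    (hsys2 : ∀ t ∈ Set.Ioc (0:ℝ) T,
      caputo α I t = f (S t) (I t) * I t - ξ₁ * I t + σ * A t + ω * C t)
    (hsys3 : ∀ t ∈ Set.Ioc (0:ℝ) T,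
      caputo α C t = φ * I t - ξ₂ * C t)
    (hsys4 : ∀ t ∈ Set.Ioc (0:ℝ) T,
      caputo α A t = ρ * I t - ξ₃ * A t) :
    ∀ t ∈ Set.Ioc (0:ℝ) T,
      caputo α
        (fun τ => S τ - Sstar - (∫ X in Sstar..S τ, f Sstar Istar / f X Istar)
          + (I τ - Istar - Istar * Real.log (I τ / Istar))
          + (ω / ξ₂) * (C τ - Cstar - Cstar * Real.log (C τ / Cstar))
          + (σ / ξ₃) * (A τ - Astar - Astar * Real.log (A τ / Astar))) t ≤ 0 := by
  intro t ht
  have htT : t ∈ Icc 0 T := Ioc_subset_Icc_self ht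
  have hξ₂0 : 0 < ξ₂ := by rw [hξ₂]; positivity
  have hξ₃0 : 0 < ξ₃ := by rw [hξ₃]; positivity
  have hg : ContinuousOn (fun X => f X Istar) (Ioi 0) :=
    (continuousOn_incidence hf_cont hIstar.le).mono Ioi_subset_Ici_self
  have hgmono : MonotoneOn (fun X => f X Istar) (Ioi 0) :=
    (strictMonoOn_incidence hf_cont hH2 hIstar.le).monotoneOn.mono Ioi_subset_Ici_self
  have hpos : ∀ {s i}, 0 < s → 0 ≤ i → 0 < f s i := incidence_pos hf_cont hH1 hH2
  refine (caputo_lyapunov_le hg (fun _ hy => hpos hy hIstar.le) hgmono hSstar hIstar hCstar hAstar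
    (div_pos hω hξ₂0).le (div_pos hσ hξ₃0).le hS hI hC hA hSpos hIpos hCpos hApos hα0.le hα1
    ht).trans ?_
  rw [hsys1 t ht, hsys2 t ht, hsys3 t ht, hsys4 t ht]
  exact sica_lyapunov_combination_nonpos hμ.le hσ.le hω.le hξ₂0 hξ₃0 hIstar hCstar hAstar
    (hIpos t htT) (hCpos t htT) (hApos t htT) (hpos hSstar hIstar.le) (hpos (hSpos t htT) hIstar.le)
    (hpos (hSpos t htT) (hIpos t htT).le) heq1 heq2 heq3 heq4
    ((monovaryOn_id_iff.2 hgmono).sub_mul_sub_nonneg hSstar (hSpos t htT))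
    (hH4 (S t) (I t) (hSpos t htT) (hIpos t htT))

theorem stmt_12 (α T : ℝ) (hα0 : 0 < α) (hα1 : α < 1) (hT : 0 < T)
    (Λ μ ρ φ σ ω d ξ₁ ξ₂ ξ₃ : ℝ)
    (hΛ : 0 < Λ) (hμ : 0 < μ) (hρ : 0 < ρ) (hφ : 0 < φ) (hσ : 0 < σ)
    (hω : 0 < ω) (hd : 0 < d)
    (hξ₁ : ξ₁ = ρ + φ + μ) (hξ₂ : ξ₂ = ω + μ) (hξ₃ : ξ₃ = σ + μ + d)
    (f : ℝ → ℝ → ℝ)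
    (hf_nonneg : ∀ S I : ℝ, 0 ≤ S → 0 ≤ I → 0 ≤ f S I)
    (hf_cont : ContinuousOn (fun p : ℝ × ℝ => f p.1 p.2) (Set.Ici 0 ×ˢ Set.Ici 0))
    (hf_cd : ContDiffOn ℝ 1 (fun p : ℝ × ℝ => f p.1 p.2) (Set.Ioi 0 ×ˢ Set.Ioi 0))
    (hH1 : ∀ I : ℝ, 0 ≤ I → f 0 I = 0)
    (hH2 : ∀ S I : ℝ, 0 < S → 0 ≤ I → 0 < deriv (fun s => f s I) S)
    (hH3 : ∀ S I : ℝ, 0 ≤ S → 0 ≤ I → deriv (fun i => f S i) I ≤ 0)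
    (Sstar Istar Cstar Astar : ℝ)
    (hSstar : 0 < Sstar) (hIstar : 0 < Istar) (hCstar : 0 < Cstar) (hAstar : 0 < Astar)
    (heq1 : Λ = μ * Sstar + f Sstar Istar * Istar)
    (heq2 : ξ₁ * Istar = f Sstar Istar * Istar + ω * Cstar + σ * Astar)
    (heq3 : φ * Istar = ξ₂ * Cstar)
    (heq4 : ρ * Istar = ξ₃ * Astar)
    (hH4 : ∀ S I : ℝ, 0 < S → 0 < I →
      (1 - f S I / f S Istar) * (f S Istar / f S I - I / Istar) ≤ 0)
    (S I C A : ℝ → ℝ)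
    (hS : ContDiffOn ℝ 1 S (Set.Icc 0 T)) (hI : ContDiffOn ℝ 1 I (Set.Icc 0 T))
    (hC : ContDiffOn ℝ 1 C (Set.Icc 0 T)) (hA : ContDiffOn ℝ 1 A (Set.Icc 0 T))
    (hSpos : ∀ t ∈ Set.Icc (0:ℝ) T, 0 < S t)
    (hIpos : ∀ t ∈ Set.Icc (0:ℝ) T, 0 < I t)
    (hCpos : ∀ t ∈ Set.Icc (0:ℝ) T, 0 < C t)
    (hApos : ∀ t ∈ Set.Icc (0:ℝ) T, 0 < A t)
    (hsys1 : ∀ t ∈ Set.Ioc (0:ℝ) T,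
      caputo α S t = Λ - μ * S t - f (S t) (I t) * I t)
    (hsys2 : ∀ t ∈ Set.Ioc (0:ℝ) T,
      caputo α I t = f (S t) (I t) * I t - ξ₁ * I t + σ * A t + ω * C t)
    (hsys3 : ∀ t ∈ Set.Ioc (0:ℝ) T,
      caputo α C t = φ * I t - ξ₂ * C t)
    (hsys4 : ∀ t ∈ Set.Ioc (0:ℝ) T,
      caputo α A t = ρ * I t - ξ₃ * A t) :
    ∀ t ∈ Set.Ioc (0:ℝ) T,
      caputo α
        (fun τ => S τ - Sstar - (∫ X in Sstar..S τ, f Sstar Istar / f X Istar)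
          + (I τ - Istar - Istar * Real.log (I τ / Istar))
          + (ω / ξ₂) * (C τ - Cstar - Cstar * Real.log (C τ / Cstar))
          + (σ / ξ₃) * (A τ - Astar - Astar * Real.log (A τ / Astar))) t ≤ 0 :=
  stmt_12_general α T hα0 hα1 Λ μ ρ φ σ ω d ξ₁ ξ₂ ξ₃ hμ hσ hω hd hξ₂ hξ₃ f hf_cont hH1 hH2 Sstar
    Istar Cstar Astar hSstar hIstar hCstar hAstar heq1 heq2 heq3 heq4 hH4 S I C A hS hI hC hA hSpos
    hIpos hCpos hApos hsys1 hsys2 hsys3 hsys4
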